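/- arXiv:2409.18894 — 2 statements merged into one kernel-verified Lean document; each statement's English description precedes it below -/
import Mathlib

section
/- Let g, κ be a compatible pair of non-decreasing, right-continuous, unbounded functions on [0,∞) with g(0)=κ(0)=0 and strictly positive on (0,∞). Then the smooth composition γ = g ∘̃ κ is a continuous function that is non-decreasing, satisfies γ(0)=0, γ(t)>0 for t>0, and is unbounded. -/
open Set Function Filter

/-- Right-continuous generalized inverse: `h⁻¹(s) = inf {u > 0 : h(u) > s}`. -/
noncomputable def ginv (h : ℝ → ℝ) (s : ℝ) : ℝ := sInf {u : ℝ | 0 < u ∧ s < h u}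

/-- Left limit of a function monotone on `[0,∞)`, with the convention `h(0−) = h(0)`. -/
noncomputable def llim (h : ℝ → ℝ) (u : ℝ) : ℝ :=
  if u ≤ 0 then h 0 else sSup (h '' Set.Ico 0 u)

/-- Right-continuity on `[0,∞)`. -/
def RightCts (h : ℝ → ℝ) : Prop := ∀ x : ℝ, 0 ≤ x → ContinuousWithinAt h (Set.Ici x) x

/-- The class `D₀↑↑(ℝ₊)`: non-decreasing, right-continuous, `h 0 = 0`, strictly
positive on `(0,∞)`, and unbounded. -/
def Dpp (h : ℝ → ℝ) : Prop :=
  MonotoneOn h (Set.Ici 0) ∧ RightCts h ∧ h 0 = 0 ∧ (∀ t : ℝ, 0 < t → 0 < h t) ∧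
    (∀ M : ℝ, ∃ t : ℝ, 0 ≤ t ∧ M < h t)

/-- `h` jumps at `u`: `h(u−) < h(u)`. -/
noncomputable def JumpAt (h : ℝ → ℝ) (u : ℝ) : Prop := llim h u < h u

/-- Compatibility condition (H1): whenever `g` jumps at `u`, the level set
`{r ≥ 0 : κ r = u}` has positive length. -/
def H1 (g κ : ℝ → ℝ) : Prop :=
  ∀ u : ℝ, JumpAt g u → ∃ r₁ r₂ : ℝ, 0 ≤ r₁ ∧ r₁ < r₂ ∧ κ r₁ = u ∧ κ r₂ = u

/-- Compatibility condition (H2): whenever `κ(s−) < κ(s)`, `g(κ(s−)) = g(κ(s)−)`. -/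
def H2 (g κ : ℝ → ℝ) : Prop :=
  ∀ s : ℝ, 0 ≤ s → llim κ s < κ s → g (llim κ s) = llim g (κ s)

-- Smooth composition `g ∘̃ κ`: equal to `g ∘ κ` outside the intervals
-- `[κ⁻¹(u−), κ⁻¹(u)]` over jump points `u` of `g`, and on each such interval the linear
-- interpolation between `(κ⁻¹(u−), g(u−))` and `(κ⁻¹(u), g(u))`.
open scoped Classical in
noncomputable def stilde (g κ : ℝ → ℝ) (s : ℝ) : ℝ :=
  if h : ∃ u : ℝ, JumpAt g u ∧ s ∈ Set.Icc (llim (ginv κ) u) (ginv κ u) then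
    let u := Classical.choose h
    llim g u + (g u - llim g u) * (s - llim (ginv κ) u) / (ginv κ u - llim (ginv κ) u)
  else g (κ s)

/-!
(H1) makes every jump interval `[κ⁻¹(u−), κ⁻¹(u)]` of `g` non-degenerate, and two of them meet at
most in a common endpoint `s`; there `κ` jumps, and (H2) identifies the two values prescribed at
`s`, so `g ∘̃ κ` does not depend on which interval is chosen. Monotonicity is then a case check.
The value at `κ⁻¹(v)` is `g(v)` (by (H2) once more when `κ` jumps over `v`), so every value of `g`
is attained, and every value in a gap `[g(u−), g(u)]` is attained on the interval of `u`. A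
non-decreasing function on `[0, ∞)` that maps it onto `[0, ∞)` is continuous.
-/

open Topology

theorem MonotoneOn.continuousOn_Ici_of_surjOn {α β : Type*} [LinearOrder α] [TopologicalSpace α]
    [OrderTopology α] [LinearOrder β] [TopologicalSpace β] [OrderTopology β] [DenselyOrdered β]
    {f : α → β} {a : α} (hf : MonotoneOn f (Ici a)) (hs : SurjOn f (Ici a) (Ici (f a))) :
    ContinuousOn f (Ici a) := by
  let F : Ici a → Ici (f a) := fun x => ⟨f x, hf self_mem_Ici x.2 x.2⟩
  have hF : Continuous F := by
    refine Monotone.continuous_of_surjective (fun x y hxy => hf x.2 y.2 hxy) fun y => ?_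
    obtain ⟨x, hx, hxy⟩ := hs y.2
    exact ⟨⟨x, hx⟩, Subtype.ext hxy⟩
  exact continuousOn_iff_continuous_domRestrict.2 (continuous_subtype_val.comp hF)

variable {g κ h : ℝ → ℝ} {a b c r s t u v w y : ℝ}

theorem RightCts.le_of_forall_lt (hh : RightCts h) (hu : 0 ≤ u) (hc : ∀ r, u < r → c ≤ h r) :
    c ≤ h u :=
  ge_of_tendsto ((hh u hu).mono Ioi_subset_Ici_self) (eventually_nhdsWithin_of_forall hc)

theorem llim_le_apply (hh : MonotoneOn h (Ici 0)) (hu : 0 ≤ u) : llim h u ≤ h u := by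
  rcases hu.eq_or_lt with rfl | hu
  · simp [llim]
  rw [llim, if_neg hu.not_ge]
  refine csSup_le ⟨h 0, 0, ⟨le_rfl, hu⟩, rfl⟩ ?_
  rintro _ ⟨t, ⟨ht, htu⟩, rfl⟩
  exact hh ht hu.le htu.le

theorem apply_le_llim (hh : MonotoneOn h (Ici 0)) (hv : 0 ≤ v) (hvu : v < u) : h v ≤ llim h u := by
  have hu : 0 < u := hv.trans_lt hvu
  rw [llim, if_neg hu.not_ge]
  refine le_csSup ⟨h u, ?_⟩ ⟨v, ⟨hv, hvu⟩, rfl⟩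
  rintro _ ⟨t, ⟨ht, htu⟩, rfl⟩
  exact hh ht hu.le htu.le

theorem llim_le_of_forall (hu : 0 < u) (hc : ∀ t, 0 ≤ t → t < u → h t ≤ c) : llim h u ≤ c := by
  rw [llim, if_neg hu.not_ge]
  refine csSup_le ⟨h 0, 0, ⟨le_rfl, hu⟩, rfl⟩ ?_
  rintro _ ⟨t, ⟨ht, htu⟩, rfl⟩
  exact hc t ht htu

theorem llim_le_llim (hh : MonotoneOn h (Ici 0)) (hu : 0 < u) (huv : u ≤ v) :
    llim h u ≤ llim h v :=
  llim_le_of_forall hu fun _ ht htu => apply_le_llim hh ht (htu.trans_le huv)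

theorem ginv_le_of_lt_apply (hr : 0 < r) (hsr : s < κ r) : ginv κ s ≤ r :=
  csInf_le ⟨0, fun _ ht => ht.1.le⟩ ⟨hr, hsr⟩

namespace Dpp

theorem apply_nonneg (hh : Dpp h) (ht : 0 ≤ t) : 0 ≤ h t :=
  hh.2.2.1 ▸ hh.1 self_mem_Ici ht ht

theorem llim_pos (hh : Dpp h) (hu : 0 < u) : 0 < llim h u :=
  (hh.2.2.2.1 _ (half_pos hu)).trans_le (apply_le_llim hh.1 (half_pos hu).le (half_lt_self hu))

theorem exists_llim_le_le (hh : Dpp h) (hy : 0 < y) : ∃ u, 0 < u ∧ llim h u ≤ y ∧ y ≤ h u := by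
  set T := {v : ℝ | 0 ≤ v ∧ y ≤ h v}
  have hT : T.Nonempty := by
    obtain ⟨t, ht, hyt⟩ := hh.2.2.2.2 y
    exact ⟨t, ht, hyt.le⟩
  have hu₀ : 0 ≤ sInf T := le_csInf hT fun _ ht => ht.1
  have hyu : y ≤ h (sInf T) := hh.2.1.le_of_forall_lt hu₀ fun r hr => by
    obtain ⟨t, ht, htr⟩ := exists_lt_of_csInf_lt hT hr
    exact ht.2.trans (hh.1 ht.1 (ht.1.trans htr.le) htr.le)
  have hu : 0 < sInf T := hu₀.lt_of_ne fun h0 => by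
    rw [← h0, hh.2.2.1] at hyu
    exact hyu.not_gt hy
  refine ⟨sInf T, hu, llim_le_of_forall hu fun t ht htu => ?_, hyu⟩
  by_contra hyt
  exact (csInf_le (⟨0, fun _ hv => hv.1⟩ : BddBelow T) ⟨ht, (not_le.1 hyt).le⟩).not_gt htu

theorem nonempty_ginv_set (hκ : Dpp κ) (s : ℝ) : {u : ℝ | 0 < u ∧ s < κ u}.Nonempty := by
  obtain ⟨t, ht, hst⟩ := hκ.2.2.2.2 s
  exact ⟨max t 1, one_pos.trans_le (le_max_right t 1),
    hst.trans_le (hκ.1 ht (ht.trans (le_max_left t 1)) (le_max_left t 1))⟩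

theorem ginv_nonneg (hκ : Dpp κ) : 0 ≤ ginv κ s :=
  le_csInf (hκ.nonempty_ginv_set s) fun _ ht => ht.1.le

theorem ginv_mono (hκ : Dpp κ) : Monotone (ginv κ) := fun _ _ hss =>
  csInf_le_csInf ⟨0, fun _ ht => ht.1.le⟩ (hκ.nonempty_ginv_set _)
    fun _ ht => ⟨ht.1, hss.trans_lt ht.2⟩

theorem lt_apply_of_ginv_lt (hκ : Dpp κ) (hr : 0 ≤ r) (hsr : ginv κ s < r) : s < κ r := by
  obtain ⟨t, ⟨ht, hst⟩, htr⟩ := exists_lt_of_csInf_lt (hκ.nonempty_ginv_set s) hsr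
  exact hst.trans_le (hκ.1 ht.le hr htr.le)

theorem le_apply_ginv (hκ : Dpp κ) : s ≤ κ (ginv κ s) :=
  hκ.2.1.le_of_forall_lt hκ.ginv_nonneg fun _ hr =>
    (hκ.lt_apply_of_ginv_lt (hκ.ginv_nonneg.trans hr.le) hr).le

theorem le_ginv (hκ : Dpp κ) (hr : 0 ≤ r) (hrs : κ r ≤ s) : r ≤ ginv κ s :=
  le_csInf (hκ.nonempty_ginv_set s) fun _ ht =>
    le_of_not_gt fun htr => (hrs.trans_lt ht.2).not_ge (hκ.1 ht.1.le hr htr.le)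

theorem apply_le_of_lt_ginv (hκ : Dpp κ) (ht : 0 ≤ t) (hu : 0 ≤ u) (htu : t < ginv κ u) :
    κ t ≤ u := by
  rcases ht.eq_or_lt with rfl | ht
  · rwa [hκ.2.2.1]
  exact le_of_not_gt fun hut => (ginv_le_of_lt_apply ht hut).not_gt htu

theorem ginv_pos (hκ : Dpp κ) (hs : 0 < s) : 0 < ginv κ s := by
  have hκ0 : Tendsto κ (𝓝[Ici 0] 0) (𝓝 0) := by
    simpa [ContinuousWithinAt, hκ.2.2.1] using hκ.2.1 0 le_rfl
  obtain ⟨ε, hε, hεs⟩ := Metric.mem_nhdsWithin_iff.1 (hκ0 (Iio_mem_nhds hs))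
  refine hε.trans_le (le_csInf (hκ.nonempty_ginv_set s) fun t ⟨ht, hst⟩ => ?_)
  refine le_of_not_gt fun htε => (hεs ⟨?_, ht.le⟩ : κ t < s).not_gt hst
  simpa [Real.dist_eq, abs_of_pos ht] using htε

theorem llim_ginv_pos (hκ : Dpp κ) (hu : 0 < u) : 0 < llim (ginv κ) u :=
  (hκ.ginv_pos (half_pos hu)).trans_le
    (apply_le_llim (hκ.ginv_mono.monotoneOn _) (half_pos hu).le (half_lt_self hu))

theorem llim_ginv_le_ginv (hκ : Dpp κ) (hu : 0 ≤ u) : llim (ginv κ) u ≤ ginv κ u :=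
  llim_le_apply (hκ.ginv_mono.monotoneOn _) hu

theorem ginv_le_llim_ginv (hκ : Dpp κ) (ha : 0 < a) (hab : a < b) :
    ginv κ a ≤ llim (ginv κ) b :=
  (hκ.ginv_mono (by linarith : a ≤ (a + b) / 2)).trans
    (apply_le_llim (hκ.ginv_mono.monotoneOn _) (by linarith) (by linarith))

theorem llim_ginv_apply_le (hκ : Dpp κ) (hs : 0 < s) : llim (ginv κ) (κ s) ≤ s :=
  llim_le_of_forall (hκ.2.2.2.1 s hs) fun _ _ hv => ginv_le_of_lt_apply hs hv

theorem apply_lt_of_lt_llim_ginv (hκ : Dpp κ) (hu : 0 < u) (hs : 0 ≤ s)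
    (hsu : s < llim (ginv κ) u) : κ s < u := by
  rw [llim, if_neg hu.not_ge] at hsu
  obtain ⟨_, ⟨w, ⟨hw, hwu⟩, rfl⟩, hsw⟩ :=
    exists_lt_of_lt_csSup (⟨ginv κ 0, 0, ⟨le_rfl, hu⟩, rfl⟩ : (ginv κ '' Ico 0 u).Nonempty) hsu
  exact (hκ.apply_le_of_lt_ginv hs hw hsw).trans_lt hwu

theorem le_apply_llim_ginv (hκ : Dpp κ) (hu : 0 < u) : u ≤ κ (llim (ginv κ) u) := by
  refine hκ.2.1.le_of_forall_lt (hκ.llim_ginv_pos hu).le fun r hr => le_of_forall_lt fun w hw => ?_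
  rcases lt_or_ge w 0 with hw0 | hw0
  · exact hw0.trans_le (hκ.apply_nonneg ((hκ.llim_ginv_pos hu).le.trans hr.le))
  · exact hκ.lt_apply_of_ginv_lt ((hκ.llim_ginv_pos hu).le.trans hr.le)
      ((apply_le_llim (hκ.ginv_mono.monotoneOn _) hw0 hw).trans_lt hr)

end Dpp

theorem H1.jump_pos (h1 : H1 g κ) (hκ : Dpp κ) (hu : JumpAt g u) : 0 < u := by
  obtain ⟨r, -, hr, -, hκr, -⟩ := h1 u hu
  refine (hκr ▸ hκ.apply_nonneg hr : 0 ≤ u).lt_of_ne ?_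
  rintro rfl
  exact (show llim g 0 < g 0 from hu).ne (by simp [llim])

theorem H1.llim_ginv_lt_ginv (h1 : H1 g κ) (hκ : Dpp κ) (hu : JumpAt g u) :
    llim (ginv κ) u < ginv κ u := by
  obtain ⟨r₁, r₂, hr₁, hr₁₂, hκr₁, hκr₂⟩ := h1 u hu
  have hr₁ : 0 < r₁ := hr₁.lt_of_ne fun h0 =>
    (h1.jump_pos hκ hu).ne' (by rw [← hκr₁, ← h0, hκ.2.2.1])
  calc llim (ginv κ) u ≤ r₁ :=
        llim_le_of_forall (h1.jump_pos hκ hu) fun _ _ hv => ginv_le_of_lt_apply hr₁ (hκr₁ ▸ hv)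
    _ < r₂ := hr₁₂
    _ ≤ ginv κ u := hκ.le_ginv (hr₁.le.trans hr₁₂.le) hκr₂.le

/-- Where `κ` jumps from at most `a` to at least `b > a`, (H2) forces `g` to be flat on `[a, b)`. -/
theorem H2.llim_le_of_le_apply_ginv (h2 : H2 g κ) (hg : MonotoneOn g (Ici 0)) (hκ : Dpp κ)
    (ha : 0 < a) (hab : a < b) (hb : b ≤ κ (ginv κ a)) : llim g b ≤ g a := by
  set s := ginv κ a
  have hs : 0 < s := hκ.ginv_pos ha
  have hκs : llim κ s ≤ a :=
    llim_le_of_forall hs fun _ ht hts => hκ.apply_le_of_lt_ginv ht ha.le hts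
  have hκs₀ : 0 ≤ llim κ s := hκ.2.2.1 ▸ apply_le_llim hκ.1 le_rfl hs
  calc llim g b ≤ llim g (κ s) := llim_le_llim hg (ha.trans hab) hb
    _ = g (llim κ s) := (h2 s hs.le (hκs.trans_lt (hab.trans_le hb))).symm
    _ ≤ g a := hg hκs₀ ha.le hκs

noncomputable def jumpInterp (g κ : ℝ → ℝ) (u s : ℝ) : ℝ :=
  llim g u + (g u - llim g u) * (s - llim (ginv κ) u) / (ginv κ u - llim (ginv κ) u)

theorem jumpInterp_left : jumpInterp g κ u (llim (ginv κ) u) = llim g u := by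
  simp [jumpInterp]

theorem jumpInterp_right (hAB : llim (ginv κ) u < ginv κ u) :
    jumpInterp g κ u (ginv κ u) = g u := by
  rw [jumpInterp, mul_div_assoc, div_self (sub_pos.2 hAB).ne', mul_one, add_sub_cancel]

theorem continuous_jumpInterp : Continuous (jumpInterp g κ u) := by
  unfold jumpInterp
  fun_prop

theorem monotone_jumpInterp (hAB : llim (ginv κ) u < ginv κ u) (hu : JumpAt g u) :
    Monotone (jumpInterp g κ u) := fun s s' hss => by
  unfold jumpInterp
  gcongr
  exact (sub_pos.2 hu).le

theorem jumpInterp_mem_Icc (hAB : llim (ginv κ) u < ginv κ u) (hu : JumpAt g u)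
    (hs : s ∈ Icc (llim (ginv κ) u) (ginv κ u)) :
    jumpInterp g κ u s ∈ Icc (llim g u) (g u) :=
  ⟨jumpInterp_left.symm.trans_le (monotone_jumpInterp hAB hu hs.1),
    (monotone_jumpInterp hAB hu hs.2).trans_eq (jumpInterp_right hAB)⟩

theorem stilde_of_not_mem (hs : ¬ ∃ u, JumpAt g u ∧ s ∈ Icc (llim (ginv κ) u) (ginv κ u)) :
    stilde g κ s = g (κ s) := by
  rw [stilde, dif_neg hs]

theorem jumpInterp_eq_of_mem_of_lt (hg : MonotoneOn g (Ici 0)) (hκ : Dpp κ) (h1 : H1 g κ)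
    (h2 : H2 g κ) (hw : JumpAt g w) (hwu : w < u)
    (hsw : s ∈ Icc (llim (ginv κ) w) (ginv κ w)) (hsu : s ∈ Icc (llim (ginv κ) u) (ginv κ u)) :
    jumpInterp g κ w s = jumpInterp g κ u s := by
  have hw₀ := h1.jump_pos hκ hw
  have hBA := hκ.ginv_le_llim_ginv hw₀ hwu
  obtain rfl : s = ginv κ w := le_antisymm hsw.2 (hBA.trans hsu.1)
  have hs : ginv κ w = llim (ginv κ) u := le_antisymm hBA hsu.1
  rw [jumpInterp_right (h1.llim_ginv_lt_ginv hκ hw), hs, jumpInterp_left]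
  exact le_antisymm (apply_le_llim hg hw₀.le hwu)
    (h2.llim_le_of_le_apply_ginv hg hκ hw₀ hwu (hs ▸ hκ.le_apply_llim_ginv (hw₀.trans hwu)))

theorem stilde_eq_jumpInterp (hg : MonotoneOn g (Ici 0)) (hκ : Dpp κ) (h1 : H1 g κ)
    (h2 : H2 g κ) (hu : JumpAt g u) (hs : s ∈ Icc (llim (ginv κ) u) (ginv κ u)) :
    stilde g κ s = jumpInterp g κ u s := by
  have hex : ∃ w, JumpAt g w ∧ s ∈ Icc (llim (ginv κ) w) (ginv κ w) := ⟨u, hu, hs⟩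
  obtain ⟨hw, hsw⟩ := Classical.choose_spec hex
  rw [stilde, dif_pos hex]
  change jumpInterp g κ (Classical.choose hex) s = _
  rcases lt_trichotomy (Classical.choose hex) u with hwu | hwu | huw
  · exact jumpInterp_eq_of_mem_of_lt hg hκ h1 h2 hw hwu hsw hs
  · rw [hwu]
  · exact (jumpInterp_eq_of_mem_of_lt hg hκ h1 h2 hu huw hs hsw).symm

theorem stilde_le_comp (hg : MonotoneOn g (Ici 0)) (hκ : Dpp κ) (h1 : H1 g κ) (h2 : H2 g κ)
    (hs : 0 ≤ s) : stilde g κ s ≤ g (κ s) := by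
  by_cases hex : ∃ u, JumpAt g u ∧ s ∈ Icc (llim (ginv κ) u) (ginv κ u)
  · obtain ⟨u, hu, hsu⟩ := hex
    have hu₀ := h1.jump_pos hκ hu
    have hκs : u ≤ κ s :=
      (hκ.le_apply_llim_ginv hu₀).trans (hκ.1 (hκ.llim_ginv_pos hu₀).le hs hsu.1)
    rw [stilde_eq_jumpInterp hg hκ h1 h2 hu hsu]
    exact (jumpInterp_mem_Icc (h1.llim_ginv_lt_ginv hκ hu) hu hsu).2.trans
      (hg hu₀.le (hu₀.le.trans hκs) hκs)
  · exact (stilde_of_not_mem hex).le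

theorem stilde_monotoneOn (hg : MonotoneOn g (Ici 0)) (hκ : Dpp κ) (h1 : H1 g κ)
    (h2 : H2 g κ) : MonotoneOn (stilde g κ) (Ici 0) := by
  intro s hs s' hs' hss
  by_cases hex : ∃ u, JumpAt g u ∧ s' ∈ Icc (llim (ginv κ) u) (ginv κ u)
  · obtain ⟨u, hu, hs'u⟩ := hex
    have hAB := h1.llim_ginv_lt_ginv hκ hu
    rw [stilde_eq_jumpInterp hg hκ h1 h2 hu hs'u]
    by_cases hsu : llim (ginv κ) u ≤ s
    · rw [stilde_eq_jumpInterp hg hκ h1 h2 hu ⟨hsu, hss.trans hs'u.2⟩]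
      exact monotone_jumpInterp hAB hu hss
    calc stilde g κ s ≤ g (κ s) := stilde_le_comp hg hκ h1 h2 hs
      _ ≤ llim g u := apply_le_llim hg (hκ.apply_nonneg hs)
          (hκ.apply_lt_of_lt_llim_ginv (h1.jump_pos hκ hu) hs (not_le.1 hsu))
      _ ≤ jumpInterp g κ u s' := (jumpInterp_mem_Icc hAB hu hs'u).1
  · rw [stilde_of_not_mem hex]
    exact (stilde_le_comp hg hκ h1 h2 hs).trans
      (hg (hκ.apply_nonneg hs) (hκ.apply_nonneg hs') (hκ.1 hs hs' hss))

theorem stilde_zero (hg : g 0 = 0) (hκ : Dpp κ) (h1 : H1 g κ) : stilde g κ 0 = 0 := by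
  rw [stilde_of_not_mem, hκ.2.2.1, hg]
  rintro ⟨u, hu, hmem⟩
  exact (hκ.llim_ginv_pos (h1.jump_pos hκ hu)).not_ge hmem.1

theorem stilde_pos (hg : Dpp g) (hκ : Dpp κ) (h1 : H1 g κ) (h2 : H2 g κ) (hs : 0 < s) :
    0 < stilde g κ s := by
  by_cases hex : ∃ u, JumpAt g u ∧ s ∈ Icc (llim (ginv κ) u) (ginv κ u)
  · obtain ⟨u, hu, hsu⟩ := hex
    rw [stilde_eq_jumpInterp hg.1 hκ h1 h2 hu hsu]
    exact (hg.llim_pos (h1.jump_pos hκ hu)).trans_le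
      (jumpInterp_mem_Icc (h1.llim_ginv_lt_ginv hκ hu) hu hsu).1
  · rw [stilde_of_not_mem hex]
    exact hg.2.2.2.1 _ (hκ.2.2.2.1 s hs)

theorem stilde_ginv (hg : MonotoneOn g (Ici 0)) (hκ : Dpp κ) (h1 : H1 g κ) (h2 : H2 g κ)
    (hv : 0 < v) : stilde g κ (ginv κ v) = g v := by
  by_cases hjv : JumpAt g v
  · rw [stilde_eq_jumpInterp hg hκ h1 h2 hjv ⟨hκ.llim_ginv_le_ginv hv.le, le_rfl⟩,
      jumpInterp_right (h1.llim_ginv_lt_ginv hκ hjv)]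
  have hgv : llim g v = g v := le_antisymm (llim_le_apply hg hv.le) (not_lt.1 hjv)
  have hvs : v ≤ κ (ginv κ v) := hκ.le_apply_ginv
  by_cases hex : ∃ w, JumpAt g w ∧ ginv κ v ∈ Icc (llim (ginv κ) w) (ginv κ w)
  · obtain ⟨w, hw, hsw⟩ := hex
    have hw₀ := h1.jump_pos hκ hw
    rw [stilde_eq_jumpInterp hg hκ h1 h2 hw hsw]
    rcases lt_trichotomy w v with hwv | rfl | hvw
    · have hs : ginv κ v = ginv κ w := le_antisymm hsw.2
        ((hκ.ginv_le_llim_ginv hw₀ hwv).trans (hκ.llim_ginv_le_ginv hv.le))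
      rw [hs, jumpInterp_right (h1.llim_ginv_lt_ginv hκ hw), ← hgv]
      exact le_antisymm (apply_le_llim hg hw₀.le hwv)
        (h2.llim_le_of_le_apply_ginv hg hκ hw₀ hwv (hs ▸ hvs))
    · exact absurd hw hjv
    · have hs : ginv κ v = llim (ginv κ) w := le_antisymm (hκ.ginv_le_llim_ginv hv hvw) hsw.1
      rw [hs, jumpInterp_left]
      exact le_antisymm (h2.llim_le_of_le_apply_ginv hg hκ hv hvw (hs ▸ hκ.le_apply_llim_ginv hw₀))
        (apply_le_llim hg hv.le hvw)
  rw [stilde_of_not_mem hex]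
  rcases hvs.eq_or_lt with hvs | hvs
  · rw [← hvs]
  have hs := hκ.ginv_pos hv
  have hno_jump : g (κ (ginv κ v)) ≤ llim g (κ (ginv κ v)) := not_lt.1 fun hj =>
    hex ⟨_, hj, hκ.llim_ginv_apply_le hs, hκ.le_ginv hs.le le_rfl⟩
  exact le_antisymm (hno_jump.trans (h2.llim_le_of_le_apply_ginv hg hκ hv hvs le_rfl))
    (hg hv.le (hv.le.trans hvs.le) hvs.le)

theorem surjOn_stilde (hg : Dpp g) (hκ : Dpp κ) (h1 : H1 g κ) (h2 : H2 g κ) :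
    SurjOn (stilde g κ) (Ici 0) (Ici 0) := by
  intro y hy
  rcases (mem_Ici.1 hy).eq_or_lt with rfl | hy
  · exact ⟨0, self_mem_Ici, stilde_zero hg.2.2.1 hκ h1⟩
  obtain ⟨u, hu, hgu, hyu⟩ := hg.exists_llim_le_le hy
  by_cases hj : JumpAt g u
  · have hAB := h1.llim_ginv_lt_ginv hκ hj
    obtain ⟨s, hs, rfl⟩ := intermediate_value_Icc hAB.le continuous_jumpInterp.continuousOn
      (by rw [jumpInterp_left, jumpInterp_right hAB]; exact ⟨hgu, hyu⟩)
    exact ⟨s, (hκ.llim_ginv_pos hu).le.trans hs.1, stilde_eq_jumpInterp hg.1 hκ h1 h2 hj hs⟩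
  · exact ⟨ginv κ u, hκ.ginv_nonneg, (stilde_ginv hg.1 hκ h1 h2 hu).trans
      (le_antisymm ((not_lt.1 hj).trans hgu) hyu)⟩

/-- For a compatible pair, `g ∘̃ κ` is a continuous element of `D₀↑↑(ℝ₊)`. -/
theorem stmt8 (g κ : ℝ → ℝ) (hg : Dpp g) (hκ : Dpp κ)
    (h1 : H1 g κ) (h2 : H2 g κ) :
    ContinuousOn (stilde g κ) (Set.Ici 0) ∧ Dpp (stilde g κ) := by
  have hmono := stilde_monotoneOn hg.1 hκ h1 h2
  have hzero := stilde_zero hg.2.2.1 hκ h1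
  have hsurj := surjOn_stilde hg hκ h1 h2
  have hcont : ContinuousOn (stilde g κ) (Ici 0) :=
    hmono.continuousOn_Ici_of_surjOn (hzero.symm ▸ hsurj)
  refine ⟨hcont, hmono, fun x hx => (hcont x hx).mono (Ici_subset_Ici.2 hx), hzero,
    fun t ht => stilde_pos hg hκ h1 h2 ht, fun M => ?_⟩
  obtain ⟨t, ht, hMt⟩ := hsurj (mem_Ici.2 (by positivity : (0 : ℝ) ≤ max M 0 + 1))
  exact ⟨t, ht, hMt ▸ (le_max_left M 0).trans_lt (lt_add_one _)⟩
end

section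
/- Let g₁, …, g_m : [0,∞) → ℝ be non-decreasing, right-continuous with left limits, unbounded, with gᵢ(0)=0 and gᵢ(t)>0 for t>0. Define f := Σᵢ gᵢ⁻¹ (sum of generalized inverses) and κ := f⁻¹. Then for each i ∈ [m], the pair (gᵢ⁻¹, κ) satisfies both compatibility conditions (H1) and (H2). -/
open Set Function Filter

section aux

variable {h : ℝ → ℝ}

lemma ginv_nonneg' (h : ℝ → ℝ) (s : ℝ) : 0 ≤ ginv h s :=
  Real.sInf_nonneg fun _ hx => hx.1.le

lemma ginv_bddBelow (h : ℝ → ℝ) (s : ℝ) : BddBelow {u : ℝ | 0 < u ∧ s < h u} :=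
  ⟨0, fun _ hx => hx.1.le⟩

lemma ginv_mono' (hne : ∀ s : ℝ, {u : ℝ | 0 < u ∧ s < h u}.Nonempty) :
    Monotone (ginv h) := fun s s' hss' =>
  csInf_le_csInf (ginv_bddBelow h s) (hne s')
    (fun u hu => ⟨hu.1, lt_of_le_of_lt hss' hu.2⟩)

lemma ginv_set_nonempty (hd : Dpp h) (s : ℝ) : {u : ℝ | 0 < u ∧ s < h u}.Nonempty := by
  obtain ⟨t, ht0, hts⟩ := hd.2.2.2.2 s
  exact ⟨max t 1, lt_of_lt_of_le one_pos (le_max_right _ _),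
    lt_of_lt_of_le hts (hd.1 ht0 (le_trans ht0 (le_max_left _ _)) (le_max_left _ _))⟩

lemma le_ginv' (hd : Dpp h) {U s : ℝ} (hU : 0 ≤ U) (hs : h U ≤ s) : U ≤ ginv h s := by
  refine le_csInf (ginv_set_nonempty hd s) (fun u hu => ?_)
  by_contra hlt
  push_neg at hlt
  exact absurd hu.2 (not_lt.2 (le_trans (hd.1 hu.1.le hU hlt.le) hs))

/-- Exact value of the generalized inverse on a flat piece. -/
lemma ginv_eq_of (hne : ∀ s : ℝ, {u : ℝ | 0 < u ∧ s < h u}.Nonempty)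
    {u r : ℝ} (hu : 0 < u) (hru : r < h u) (hlb : ∀ v, 0 < v → v < u → h v ≤ r) :
    ginv h r = u := by
  refine le_antisymm (csInf_le (ginv_bddBelow h r) ⟨hu, hru⟩)
    (le_csInf ⟨u, hu, hru⟩ fun v hv => ?_)
  by_contra hlt
  push_neg at hlt
  exact absurd hv.2 (not_lt.2 (hlb v hv.1 hlt))

end aux

/-- With `f := Σᵢ gᵢ⁻¹` and `κ := f⁻¹`, each pair `(gᵢ⁻¹, κ)` is compatible. -/
theorem stmt11 (m : ℕ) (g : Fin m → ℝ → ℝ) (hg : ∀ i, Dpp (g i)) :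
    ∀ i : Fin m,
      H1 (ginv (g i)) (ginv (fun s => ∑ j, ginv (g j) s)) ∧
      H2 (ginv (g i)) (ginv (fun s => ∑ j, ginv (g j) s)) := by
  intro i
  set F : ℝ → ℝ := fun s => ∑ j, ginv (g j) s with hF
  set κ : ℝ → ℝ := ginv F with hκ
  have hφne : ∀ j : Fin m, ∀ s : ℝ, {u : ℝ | 0 < u ∧ s < g j u}.Nonempty :=
    fun j s => ginv_set_nonempty (hg j) s
  have hφmono : ∀ j : Fin m, Monotone (ginv (g j)) := fun j => ginv_mono' (hφne j)
  have hFmono : Monotone F := fun x y hxy =>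
    Finset.sum_le_sum fun j _ => hφmono j hxy
  have hFnn : ∀ s, 0 ≤ F s := fun s =>
    Finset.sum_nonneg fun j _ => ginv_nonneg' _ _
  -- the level sets of F are nonempty
  have hFne : ∀ r : ℝ, {w : ℝ | 0 < w ∧ r < F w}.Nonempty := by
    intro r
    set U : ℝ := max (r + 1) 1 with hU
    have hU0 : 0 ≤ U := le_trans zero_le_one (le_max_right _ _)
    set w : ℝ := max (g i U) 1 with hw
    have hw0 : 0 < w := lt_of_lt_of_le one_pos (le_max_right _ _)
    refine ⟨w, hw0, ?_⟩
    have h1 : U ≤ ginv (g i) w := le_ginv' (hg i) hU0 (le_max_left _ _)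
    have h2 : ginv (g i) w ≤ F w :=
      Finset.single_le_sum (fun j _ => ginv_nonneg' (g j) w) (Finset.mem_univ i)
    have : r < U := lt_of_lt_of_le (lt_add_one r) (le_max_left _ _)
    linarith
  have hκmono : Monotone κ := ginv_mono' hFne
  have hκnn : ∀ r, 0 ≤ κ r := fun r => ginv_nonneg' _ _
  constructor
  · -- H1
    intro u hjump
    unfold JumpAt at hjump
    -- u > 0
    have hu0 : 0 < u := by
      by_contra hle
      push_neg at hle
      rw [llim, if_pos hle] at hjump
      rcases lt_or_eq_of_le hle with hlt | heq
      · have : ginv (g i) u = 0 := by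
          have hsub : {v : ℝ | 0 < v ∧ u < g i v} = {v : ℝ | 0 < v} := by
            ext v
            simp only [Set.mem_setOf_eq, and_iff_left_iff_imp]
            intro hv
            exact lt_trans hlt ((hg i).2.2.2.1 v hv)
          have hIoi : {v : ℝ | 0 < v} = Set.Ioi (0:ℝ) := rfl
          rw [ginv, hsub, hIoi]
          exact csInf_Ioi
        rw [this] at hjump
        exact absurd hjump (not_lt.2 (ginv_nonneg' _ _))
      · rw [heq] at hjump; exact lt_irrefl _ hjump
    have hllim : ∀ (ψ : ℝ → ℝ), llim ψ u = sSup (ψ '' Set.Ico 0 u) := fun ψ => by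
      rw [llim, if_neg (not_le.2 hu0)]
    -- llim F u < F u
    have hbddj : ∀ j : Fin m, BddAbove (ginv (g j) '' Set.Ico 0 u) := fun j =>
      ⟨ginv (g j) u, by
        rintro x ⟨v, hv, rfl⟩
        exact hφmono j hv.2.le⟩
    have hllimj_le : ∀ j : Fin m, llim (ginv (g j)) u ≤ ginv (g j) u := fun j => by
      rw [hllim]
      exact csSup_le ⟨ginv (g j) 0, ⟨0, ⟨le_refl 0, hu0⟩, rfl⟩⟩
        (by rintro x ⟨v, hv, rfl⟩; exact hφmono j hv.2.le)
    have hFlim_le : llim F u ≤ ∑ j, llim (ginv (g j)) u := by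
      rw [hllim]
      refine csSup_le ⟨F 0, ⟨0, ⟨le_refl 0, hu0⟩, rfl⟩⟩ ?_
      rintro x ⟨v, hv, rfl⟩
      refine Finset.sum_le_sum fun j _ => ?_
      rw [hllim]
      exact le_csSup (hbddj j) ⟨v, hv, rfl⟩
    have hFjump : llim F u < F u := by
      refine lt_of_le_of_lt hFlim_le ?_
      refine Finset.sum_lt_sum (fun j _ => hllimj_le j) ⟨i, Finset.mem_univ i, hjump⟩
    set r₁ : ℝ := llim F u with hr₁
    set r₂ : ℝ := (r₁ + F u) / 2 with hr₂
    have hr₁0 : 0 ≤ r₁ := by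
      rw [hr₁, hllim]
      exact le_trans (hFnn 0) (le_csSup (⟨F u, by
        rintro x ⟨v, hv, rfl⟩; exact hFmono hv.2.le⟩) ⟨0, ⟨le_refl 0, hu0⟩, rfl⟩)
    have h12 : r₁ < r₂ := by rw [hr₂]; linarith
    have h2F : r₂ < F u := by rw [hr₂]; linarith
    have hflat : ∀ v, 0 < v → v < u → F v ≤ r₁ := by
      intro v hv0 hvu
      rw [hr₁, hllim]
      exact le_csSup (⟨F u, by rintro x ⟨w, hw, rfl⟩; exact hFmono hw.2.le⟩)
        ⟨v, ⟨hv0.le, hvu⟩, rfl⟩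
    refine ⟨r₁, r₂, hr₁0, h12, ?_, ?_⟩
    · exact ginv_eq_of hFne hu0 hFjump hflat
    · exact ginv_eq_of hFne hu0 h2F (fun v hv0 hvu => le_trans (hflat v hv0 hvu) h12.le)
  · -- H2
    intro s hs0 hjump
    rcases eq_or_lt_of_le hs0 with hseq | hs0'
    · exfalso
      rw [← hseq, llim, if_pos (le_refl 0)] at hjump
      have : κ 0 = ginv F 0 := rfl
      exact lt_irrefl _ hjump
    set a : ℝ := llim κ s with ha
    set b : ℝ := κ s with hb
    have hab : a < b := hjump
    have ha_eq : a = sSup (κ '' Set.Ico 0 s) := by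
      rw [ha, llim, if_neg (not_le.2 hs0')]
    have hbddκ : BddAbove (κ '' Set.Ico 0 s) := ⟨κ s, by
      rintro x ⟨v, hv, rfl⟩; exact hκmono hv.2.le⟩
    have ha0 : 0 ≤ a := by
      rw [ha_eq]
      exact le_trans (hκnn 0) (le_csSup hbddκ ⟨0, ⟨le_refl 0, hs0'⟩, rfl⟩)
    have hb0 : 0 < b := lt_of_le_of_lt ha0 hab
    -- F is constant equal to s on (a, b)
    have hFs : ∀ v, a < v → v < b → F v = s := by
      intro v hav hvb
      have hv0 : 0 < v := lt_of_le_of_lt ha0 hav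
      have hle : F v ≤ s := by
        by_contra hgt
        push_neg at hgt
        have : κ s ≤ v := csInf_le (ginv_bddBelow F s) ⟨hv0, hgt⟩
        exact absurd hvb (not_lt.2 this)
      have hge : s ≤ F v := by
        by_contra hlt
        push_neg at hlt
        set r : ℝ := max (F v) 0 with hr
        have hr0 : 0 ≤ r := le_max_right _ _
        have hrs : r < s := max_lt hlt hs0'
        have hκr : κ r ≤ a := by
          rw [ha_eq]
          exact le_csSup hbddκ ⟨r, ⟨hr0, hrs⟩, rfl⟩
        have hκrv : κ r < v := lt_of_le_of_lt hκr hav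
        obtain ⟨w, hw, hwv⟩ := exists_lt_of_csInf_lt (hFne r) hκrv
        have : r < F v := lt_of_lt_of_le hw.2 (hFmono hwv.le)
        exact absurd (le_max_left (F v) 0) (not_le.2 this)
      linarith
    set v₀ : ℝ := (a + b) / 2 with hv₀
    have hav₀ : a < v₀ := by rw [hv₀]; linarith
    have hv₀b : v₀ < b := by rw [hv₀]; linarith
    -- each ginv (g j) is constant on (a, b)
    have hconst : ∀ j : Fin m, ∀ v, a < v → v < b → ginv (g j) v = ginv (g j) v₀ := by
      intro j v hav hvb
      have hsum : F v = F v₀ := by rw [hFs v hav hvb, hFs v₀ hav₀ hv₀b]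
      rcases le_total v v₀ with hvv | hvv
      · exact (Finset.sum_eq_sum_iff_of_le (fun j _ => hφmono j hvv)).1
          hsum j (Finset.mem_univ j)
      · exact ((Finset.sum_eq_sum_iff_of_le (fun j _ => hφmono j hvv)).1
          hsum.symm j (Finset.mem_univ j)).symm
    set c : ℝ := ginv (g i) v₀ with hc
    -- llim (ginv (g i)) b = c
    have hub : ∀ x ∈ ginv (g i) '' Set.Ico 0 b, x ≤ c := by
      rintro x ⟨v, hv, rfl⟩
      rcases le_total v v₀ with hvv | hvv
      · exact hφmono i hvv
      · exact le_of_eq (hconst i v (lt_of_lt_of_le hav₀ hvv) hv.2)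
    have hllimb : llim (ginv (g i)) b = c := by
      rw [llim, if_neg (not_le.2 hb0)]
      refine le_antisymm (csSup_le ⟨ginv (g i) 0, ⟨0, ⟨le_refl 0, hb0⟩, rfl⟩⟩ hub) ?_
      exact le_csSup ⟨c, hub⟩ ⟨v₀, ⟨le_trans ha0 hav₀.le, hv₀b⟩, rfl⟩
    -- ginv (g i) a = c
    have hgia : ginv (g i) a = c := by
      refine le_antisymm (hφmono i hav₀.le) ?_
      refine le_csInf (hφne i a) (fun u hu => ?_)
      -- u satisfies 0 < u and a < g i u; show c ≤ u
      set s' : ℝ := (a + min b (g i u)) / 2 with hs'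
      have hmin : a < min b (g i u) := lt_min hab hu.2
      have has' : a < s' := by rw [hs']; linarith
      have hs'b : s' < b := by
        have : s' < min b (g i u) := by rw [hs']; linarith
        exact lt_of_lt_of_le this (min_le_left _ _)
      have hs'g : s' < g i u := by
        have : s' < min b (g i u) := by rw [hs']; linarith
        exact lt_of_lt_of_le this (min_le_right _ _)
      have : ginv (g i) s' ≤ u := csInf_le (ginv_bddBelow _ _) ⟨hu.1, hs'g⟩
      rw [hconst i s' has' hs'b] at this
      exact this
    rw [← ha, ← hb] at *
    rw [hgia, hllimb]
end
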